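/- arXiv:1611.08087 — 3 statements merged into one kernel-verified Lean document; each statement's English description precedes it below -/
import Mathlib

section
/- With f as in Pettis' example (f(t) = Σ_n 2^n f_n χ_{I_n}(t), (f_n) orthonormal in L^2[0,1], I_n = (1/2^n, 1/2^n + 1/4^n)), the operator S : L^2[0,1] → L^2[0,1] given by S(g)(t) = ⟨f(t), g⟩ is not compact. -/
/-!
Since the intervals `I_n` are pairwise disjoint, `⟪f t, f_n⟫ = 2^{n+1} χ_{I_n}(t)`, so `S` maps
the orthonormal sequence `(f_n)` to `(2^{n+1} χ_{I_n})`, which is again orthonormal because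
`|I_n| = 4^{-(n+1)}`. A compact operator maps the bounded sequence `(f_n)` into a compact set,
but the members of an infinite orthonormal family are `√2` apart, so no subsequence converges.
-/

open MeasureTheory Set Function

section InnerProductSpace

variable {𝕜 E ι : Type*} [RCLike 𝕜] [NormedAddCommGroup E] [InnerProductSpace 𝕜 E]

theorem Orthonormal.norm_sub_sq {v : ι → E} (hv : Orthonormal 𝕜 v) {i j : ι} (hij : i ≠ j) :
    ‖v i - v j‖ ^ 2 = 2 := by
  rw [_root_.norm_sub_sq (𝕜 := 𝕜), hv.norm_eq_one, hv.norm_eq_one, hv.inner_eq_zero hij]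
  norm_num

theorem Orthonormal.range_not_subset_isCompact [Infinite ι] {v : ι → E} (hv : Orthonormal 𝕜 v)
    {K : Set E} (hK : IsCompact K) : ¬ range v ⊆ K := by
  intro hvK
  set e := Infinite.natEmbedding ι
  obtain ⟨x, -, φ, hφ, hlim⟩ := hK.isSeqCompact fun n => hvK (mem_range_self (e n))
  obtain ⟨N, hN⟩ := Metric.cauchySeq_iff'.1 hlim.cauchySeq 1 one_pos
  have hne : e (φ (N + 1)) ≠ e (φ N) := e.injective.ne (hφ N.lt_succ_self).ne'
  have hsep : 1 ≤ dist (v (e (φ (N + 1)))) (v (e (φ N))) := by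
    rw [dist_eq_norm, ← one_le_sq_iff₀ (norm_nonneg _), hv.norm_sub_sq hne]
    norm_num
  exact (hN (N + 1) N.le_succ).not_ge hsep

theorem not_isCompactOperator_of_orthonormal_comp [Infinite ι] {F : Type*}
    [NormedAddCommGroup F] [NormedSpace 𝕜 F] {T : F →L[𝕜] E} {v : ι → F}
    (hv : Bornology.IsBounded (range v)) (hTv : Orthonormal 𝕜 (T ∘ v)) :
    ¬ IsCompactOperator T := fun hT => by
  obtain ⟨K, hK, hTK⟩ := hT.image_subset_compact_of_bounded (f := (T : F →ₗ[𝕜] E)) hv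
  exact hTv.range_not_subset_isCompact hK (range_comp T v ▸ hTK)

theorem Orthonormal.inner_eq_indicator_of_eq_smul {α : Type*} {e : ι → E}
    (he : Orthonormal 𝕜 e) {s : ι → Set α} (hdisj : Pairwise (Disjoint on s)) {c : ι → 𝕜}
    {f : α → E} (hf : ∀ i, ∀ t ∈ s i, f t = c i • e i) (hf0 : ∀ t, (∀ i, t ∉ s i) → f t = 0)
    (i : ι) (t : α) :
    inner 𝕜 (f t) (e i) = (s i).indicator (fun _ => starRingEnd 𝕜 (c i)) t := by
  by_cases ht : ∃ j, t ∈ s j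
  · obtain ⟨j, htj⟩ := ht
    rw [hf j t htj, inner_smul_left]
    rcases eq_or_ne j i with rfl | hji
    · rw [indicator_of_mem htj, inner_self_eq_norm_sq_to_K, he.norm_eq_one, RCLike.ofReal_one,
        one_pow, mul_one]
    · rw [he.inner_eq_zero hji, mul_zero, indicator_of_notMem ((hdisj hji).notMem_of_mem_left htj)]
  · rw [hf0 t (not_exists.1 ht), inner_zero_left, indicator_of_notMem (not_exists.1 ht i)]

theorem orthonormal_indicatorConstLp [CompleteSpace E] {α : Type*} [MeasurableSpace α]
    {μ : Measure α} {s : ι → Set α} (hs : ∀ i, MeasurableSet (s i)) (hμs : ∀ i, μ (s i) ≠ ⊤)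
    (hdisj : Pairwise (Disjoint on s)) {c : ι → E} (hc : ∀ i, ‖c i‖ ^ 2 * μ.real (s i) = 1) :
    Orthonormal 𝕜 fun i => indicatorConstLp 2 (hs i) (hμs i) (c i) := by
  classical
  refine orthonormal_iff_ite.2 fun i j => ?_
  rw [L2.inner_indicatorConstLp_indicatorConstLp (hs i) (hs j) (hμs i) (hμs j)]
  split_ifs with hij
  · subst hij
    rw [inter_self, inner_self_eq_norm_sq_to_K, RCLike.real_smul_eq_coe_mul, ← RCLike.ofReal_pow,
      ← RCLike.ofReal_mul, mul_comm, hc, RCLike.ofReal_one]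
  · rw [(hdisj hij).inter_eq, measureReal_empty, zero_smul]

end InnerProductSpace

/-- The paper's interval `I_{n+1}`. -/
def pettisInterval (n : ℕ) : Set ℝ := Ioo (1 / 2 ^ (n + 1)) (1 / 2 ^ (n + 1) + 1 / 4 ^ (n + 1))

theorem measurableSet_pettisInterval (n : ℕ) : MeasurableSet (pettisInterval n) :=
  measurableSet_Ioo

theorem pairwise_disjoint_pettisInterval : Pairwise (Disjoint on pettisInterval) := by
  refine (pairwise_disjoint_on _).2 fun m n hmn => Ioo_disjoint_Ioo.2 (min_le_of_right_le ?_)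
  have h4 : (1 : ℝ) / 4 ^ (n + 1) ≤ 1 / 2 ^ (n + 1) :=
    one_div_le_one_div_of_le (by positivity) (pow_le_pow_left₀ (by norm_num) (by norm_num) _)
  have h2 : (1 : ℝ) / 2 ^ n ≤ 1 / 2 ^ (m + 1) :=
    one_div_le_one_div_of_le (by positivity) (pow_le_pow_right₀ (by norm_num) hmn)
  have : (1 : ℝ) / 2 ^ (n + 1) + 1 / 2 ^ (n + 1) = 1 / 2 ^ n := by
    rw [pow_succ]; field_simp; norm_num
  exact le_max_of_le_left (by linarith)

theorem pettisInterval_subset_Icc (n : ℕ) : pettisInterval n ⊆ Icc 0 1 := by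
  have h2 : (1 : ℝ) / 2 ^ (n + 1) ≤ 1 / 2 :=
    one_div_le_one_div_of_le (by norm_num) (le_self_pow₀ (by norm_num) n.succ_ne_zero)
  have h4 : (1 : ℝ) / 4 ^ (n + 1) ≤ 1 / 4 :=
    one_div_le_one_div_of_le (by norm_num) (le_self_pow₀ (by norm_num) n.succ_ne_zero)
  exact Ioo_subset_Icc_self.trans (Icc_subset_Icc (by positivity) (by linarith))

theorem volume_real_pettisInterval (n : ℕ) :
    volume.real (pettisInterval n) = 1 / 4 ^ (n + 1) := by
  rw [pettisInterval, Real.volume_real_Ioo_of_le (le_add_of_nonneg_right (by positivity))]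
  ring

/-- In Pettis' example, the operator `S : L²[0,1] → L²[0,1]`, `S(g)(t) = ⟨f(t), g⟩`,
is not compact. -/
theorem stmt7
    (μ : Measure ℝ) (hμ : μ = volume.restrict (Set.Icc (0:ℝ) 1))
    (fseq : ℕ → Lp ℝ 2 μ) (horth : Orthonormal ℝ fseq)
    (f : ℝ → Lp ℝ 2 μ)
    (hfI : ∀ n : ℕ, ∀ t ∈ Set.Ioo ((1:ℝ)/2^(n+1)) (1/2^(n+1) + 1/4^(n+1)),
      f t = ((2:ℝ)^(n+1)) • fseq n)
    (hf0 : ∀ t : ℝ, (∀ n : ℕ, t ∉ Set.Ioo ((1:ℝ)/2^(n+1)) (1/2^(n+1) + 1/4^(n+1))) → f t = 0)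
    (S : Lp ℝ 2 μ →L[ℝ] Lp ℝ 2 μ)
    (hS : ∀ g : Lp ℝ 2 μ, (S g : ℝ → ℝ) =ᵐ[μ] fun t => (inner ℝ (f t) g : ℝ)) :
    ¬ IsCompactOperator S := by
  subst hμ
  have hμI (n : ℕ) :
      (volume.restrict (Icc (0 : ℝ) 1)).real (pettisInterval n) = 1 / 4 ^ (n + 1) := by
    rw [measureReal_restrict_apply (measurableSet_pettisInterval n),
      inter_eq_left.2 (pettisInterval_subset_Icc n), volume_real_pettisInterval]
  have hfin (n : ℕ) : volume.restrict (Icc (0 : ℝ) 1) (pettisInterval n) ≠ ⊤ := by finiteness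
  have hSf (n : ℕ) : S (fseq n) =
      indicatorConstLp 2 (measurableSet_pettisInterval n) (hfin n) ((2 : ℝ) ^ (n + 1)) := by
    refine Lp.ext <| (hS (fseq n)).trans <| .trans (.of_forall fun t => ?_)
      indicatorConstLp_coeFn.symm
    simpa only [conj_trivial] using
      horth.inner_eq_indicator_of_eq_smul pairwise_disjoint_pettisInterval hfI hf0 n t
  have horthS : Orthonormal ℝ (S ∘ fseq) := by
    convert orthonormal_indicatorConstLp measurableSet_pettisInterval hfin
      pairwise_disjoint_pettisInterval (c := fun n => (2 : ℝ) ^ (n + 1)) fun n => ?_ using 1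
    · exact funext hSf
    · rw [hμI, Real.norm_eq_abs, sq_abs, ← pow_mul, mul_comm (n + 1), pow_mul]
      norm_num
  refine not_isCompactOperator_of_orthonormal_comp ?_ horthS
  exact isBounded_iff_forall_norm_le.2 ⟨1, by rintro _ ⟨n, rfl⟩; exact (horth.norm_eq_one n).le⟩
end

section
/- Let f : Ω → X be strongly measurable and p-Dunford integrable, and let ν_f : Σ → X** be the associated Dunford indefinite integral. If ν_f has bounded p-variation, then f is p-Bochner integrable, with ‖f‖_{L^p(μ,X)} = |ν_f|_p(Ω). -/
/-!
Once `f` is Bochner integrable, `ν(A)` is the Bochner integral of `f` over `A`, so Hölder's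
inequality gives `‖ν(A)‖ ^ p ≤ μ(A) ^ (p - 1) ∫_A ‖f‖ ^ p` and hence `|ν|_p(Ω) ≤ ‖f‖_p`.

Conversely, cover the separable range of `f` by countably many balls `B(x_k, ε)` and disjointify
their preimages into sets `A_k`. A norming functional of `x_k` gives
`‖ν(A_k)‖ ≥ (‖x_k‖ - ε) μ(A_k)`, hence `∫_{A_k} (‖f‖ - 2ε)₊ ^ p ≤ ‖ν(A_k)‖ ^ p / μ(A_k) ^ (p - 1)`.
Finitely many `A_k` together with the complement of their union form a partition, so summing
bounds `∫ (‖f‖ - 2ε)₊ ^ p` by `|ν|_p(Ω) ^ p`, and `ε → 0` yields `‖f‖_p ≤ |ν|_p(Ω) < ∞`.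
In particular `f ∈ Lᵖ`, and the first inequality applies.
-/

open MeasureTheory ENNReal

/-- A finite partition of `Ω` into measurable sets. -/
def IsMeasPartition {Ω : Type*} [MeasurableSpace Ω] (P : Finset (Set Ω)) : Prop :=
  (∀ A ∈ P, MeasurableSet A) ∧ (P : Set (Set Ω)).PairwiseDisjoint id ∧
    ⋃₀ (P : Set (Set Ω)) = Set.univ

/-- The total `p`-variation of a vector-valued set function `ν`. -/
noncomputable def totalPVariation {Ω : Type*} [MeasurableSpace Ω] (μ : Measure Ω) (p : ℝ)
    {Z : Type*} [NormedAddCommGroup Z] (ν : Set Ω → Z) : ℝ≥0∞ :=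
  ⨆ (P : Finset (Set Ω)) (_ : IsMeasPartition P),
    (∑ A ∈ P, ENNReal.ofReal ‖ν A‖ ^ p / (μ A) ^ (p - 1)) ^ (1 / p)

section Partition

open Function

variable {Ω : Type*} [MeasurableSpace Ω] {μ : Measure Ω} {p : ℝ}

lemma IsMeasPartition.sum_setLIntegral {P : Finset (Set Ω)} (hP : IsMeasPartition P)
    (g : Ω → ℝ≥0∞) : ∑ A ∈ P, ∫⁻ ω in A, g ω ∂μ = ∫⁻ ω, g ω ∂μ := by
  have h := lintegral_biUnion_finset (μ := μ) hP.2.1 hP.1 g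
  simp only [id] at h
  rw [← h, ← Finset.set_biUnion_coe, ← Set.sUnion_eq_biUnion, hP.2.2, Measure.restrict_univ]

lemma isMeasPartition_insert_compl_biUnion [DecidableEq (Set Ω)] {ι : Type*} (s : Finset ι)
    {A : ι → Set Ω} (hA : ∀ i, MeasurableSet (A i)) (hdisj : (s : Set ι).PairwiseDisjoint A) :
    IsMeasPartition (insert (⋃ i ∈ s, A i)ᶜ (s.image A)) := by
  refine ⟨?_, ?_, ?_⟩
  · simp only [Finset.mem_insert, Finset.mem_image]
    rintro _ (rfl | ⟨i, -, rfl⟩)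
    exacts [(Finset.measurableSet_biUnion s fun i _ ↦ hA i).compl, hA i]
  · rw [Finset.coe_insert, Finset.coe_image]
    refine Set.PairwiseDisjoint.insert ?_ ?_
    · rintro _ ⟨i, hi, rfl⟩ _ ⟨j, hj, rfl⟩ hij
      exact hdisj hi hj fun h ↦ hij (congrArg A h)
    · rintro _ ⟨j, hj, rfl⟩ -
      exact Set.disjoint_compl_left_iff_subset.2 (Set.subset_biUnion_of_mem (u := A) hj)
  · simp only [Finset.coe_insert, Set.sUnion_insert, Finset.coe_image, Set.sUnion_image,
      Finset.mem_coe, Set.compl_union_self]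

variable {Z : Type*} [NormedAddCommGroup Z] {ν : Set Ω → Z}

lemma sum_le_totalPVariation_rpow (hp : 0 < p) {P : Finset (Set Ω)} (hP : IsMeasPartition P) :
    ∑ A ∈ P, ENNReal.ofReal ‖ν A‖ ^ p / μ A ^ (p - 1) ≤ totalPVariation μ p ν ^ p := by
  rw [← ENNReal.rpow_inv_le_iff hp, ← one_div]
  exact le_iSup₂_of_le P hP le_rfl

lemma tsum_le_totalPVariation_rpow (hp : 0 < p) (hν : ν ∅ = 0) {ι : Type*} {A : ι → Set Ω}
    (hA : ∀ i, MeasurableSet (A i)) (hdisj : Pairwise (Disjoint on A)) :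
    ∑' i, ENNReal.ofReal ‖ν (A i)‖ ^ p / μ (A i) ^ (p - 1) ≤ totalPVariation μ p ν ^ p := by
  classical
  refine ENNReal.summable.tsum_le_of_sum_le fun s ↦ ?_
  have hempty : ENNReal.ofReal ‖ν ⊥‖ ^ p / μ ⊥ ^ (p - 1) = 0 := by
    simp [hν, ENNReal.zero_rpow_of_pos hp]
  calc ∑ i ∈ s, ENNReal.ofReal ‖ν (A i)‖ ^ p / μ (A i) ^ (p - 1)
      = ∑ B ∈ s.image A, ENNReal.ofReal ‖ν B‖ ^ p / μ B ^ (p - 1) :=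
        (Finset.sum_image_of_disjoint (g := fun B ↦ ENNReal.ofReal ‖ν B‖ ^ p / μ B ^ (p - 1))
          hempty (hdisj.set_pairwise _)).symm
    _ ≤ ∑ B ∈ insert (⋃ i ∈ s, A i)ᶜ (s.image A), ENNReal.ofReal ‖ν B‖ ^ p / μ B ^ (p - 1) :=
        Finset.sum_le_sum_of_subset (Finset.subset_insert _ _)
    _ ≤ totalPVariation μ p ν ^ p :=
        sum_le_totalPVariation_rpow hp
          (isMeasPartition_insert_compl_biUnion s hA (hdisj.set_pairwise _))

end Partition

section Lp

variable {Ω : Type*} [MeasurableSpace Ω] {μ : Measure Ω} {p : ℝ}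

lemma eLpNorm_ofReal_eq_lintegral_rpow_enorm {E : Type*} [ENorm E]
    (hp : 0 < p) (f : Ω → E) :
    eLpNorm f (ENNReal.ofReal p) μ = (∫⁻ ω, ‖f ω‖ₑ ^ p ∂μ) ^ (1 / p) := by
  rw [eLpNorm_eq_lintegral_rpow_enorm_toReal (by simpa using hp) ofReal_ne_top,
    ENNReal.toReal_ofReal hp.le]

lemma lintegral_enorm_rpow_le_mul_measure_univ {E : Type*} [TopologicalSpace E]
    [ContinuousENorm E] (hp : 1 ≤ p) {f : Ω → E} (hf : AEStronglyMeasurable f μ) :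
    (∫⁻ ω, ‖f ω‖ₑ ∂μ) ^ p ≤ (∫⁻ ω, ‖f ω‖ₑ ^ p ∂μ) * μ Set.univ ^ (p - 1) := by
  have hp0 : 0 < p := one_pos.trans_le hp
  have h := eLpNorm'_le_eLpNorm'_mul_rpow_measure_univ one_pos hp hf
  simp only [eLpNorm'_eq_lintegral_enorm, ENNReal.rpow_one, div_one] at h
  calc (∫⁻ ω, ‖f ω‖ₑ ∂μ) ^ p
      ≤ ((∫⁻ ω, ‖f ω‖ₑ ^ p ∂μ) ^ (1 / p) * μ Set.univ ^ (1 - 1 / p)) ^ p :=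
        ENNReal.rpow_le_rpow h hp0.le
    _ = (∫⁻ ω, ‖f ω‖ₑ ^ p ∂μ) * μ Set.univ ^ (p - 1) := by
        rw [ENNReal.mul_rpow_of_nonneg _ _ hp0.le, ← ENNReal.rpow_mul, ← ENNReal.rpow_mul,
          one_div_mul_cancel hp0.ne', ENNReal.rpow_one, sub_mul, one_mul,
          one_div_mul_cancel hp0.ne']

lemma lintegral_ofReal_rpow_le_of_forall_sub {g : Ω → ℝ} (hg : Measurable g) {c : ℝ≥0∞}
    (hp : 0 ≤ p) (h : ∀ ε > 0, ∫⁻ ω, ENNReal.ofReal (g ω - ε) ^ p ∂μ ≤ c) :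
    ∫⁻ ω, ENNReal.ofReal (g ω) ^ p ∂μ ≤ c := by
  set G : ℕ → Ω → ℝ≥0∞ := fun n ω ↦ ENNReal.ofReal (g ω - 1 / (n + 1)) ^ p
  have hG_meas : ∀ n, AEMeasurable (G n) μ := fun n ↦
    ((hg.sub_const _).ennreal_ofReal.pow_const p).aemeasurable
  have hG_mono : ∀ ω, Monotone fun n ↦ G n ω := fun ω n m hnm ↦ by
    dsimp only [G]
    gcongr
  have hG_lim : ∀ ω, Filter.Tendsto (fun n ↦ G n ω) Filter.atTop
      (nhds (ENNReal.ofReal (g ω) ^ p)) := fun ω ↦ by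
    have hcont : Continuous fun t : ℝ ↦ ENNReal.ofReal (g ω - t) ^ p :=
      ENNReal.continuous_rpow_const.comp (ENNReal.continuous_ofReal.comp (continuous_sub_left _))
    have h := (hcont.tendsto 0).comp tendsto_one_div_add_atTop_nhds_zero_nat
    rwa [sub_zero] at h
  exact le_of_tendsto' (lintegral_tendsto_of_tendsto_of_monotone hG_meas
    (.of_forall hG_mono) (.of_forall hG_lim)) fun n ↦ h _ (by positivity)

lemma MeasureTheory.StronglyMeasurable.exists_seq_iUnion_preimage_ball {X : Type*}
    [PseudoMetricSpace X] [Nonempty X] {f : Ω → X} (hf : StronglyMeasurable f) {ε : ℝ}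
    (hε : 0 < ε) :
    ∃ x : ℕ → X, ⋃ k, f ⁻¹' Metric.ball (x k) ε = Set.univ := by
  obtain ⟨c, hc, hfc⟩ := hf.isSeparable_range
  obtain ⟨x, hx⟩ := (hc.insert (Classical.arbitrary X)).exists_eq_range (Set.insert_nonempty _ _)
  refine ⟨x, Set.eq_univ_of_forall fun ω ↦ ?_⟩
  have hω : f ω ∈ closure (Set.range x) :=
    hx ▸ closure_mono (Set.subset_insert _ _) (hfc ⟨ω, rfl⟩)
  obtain ⟨_, ⟨k, rfl⟩, hk⟩ := Metric.mem_closure_iff.1 hω ε hε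
  exact Set.mem_iUnion.2 ⟨k, Metric.mem_ball.2 (dist_comm (x k) (f ω) ▸ hk)⟩

end Lp

section Dunford

variable {Ω : Type*} [MeasurableSpace Ω] {μ : Measure Ω} {p : ℝ}
  {X : Type*} [NormedAddCommGroup X] [NormedSpace ℝ X] {f : Ω → X}
  {ν : Set Ω → StrongDual ℝ (StrongDual ℝ X)}

def IsDunfordIntegral (μ : Measure Ω) (f : Ω → X) (ν : Set Ω → StrongDual ℝ (StrongDual ℝ X)) :
    Prop :=
  ∀ A : Set Ω, MeasurableSet A → ∀ x' : StrongDual ℝ X, ν A x' = ∫ ω in A, x' (f ω) ∂μ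

namespace IsDunfordIntegral

variable (hν : IsDunfordIntegral μ f ν)
include hν

lemma empty : ν ∅ = 0 := by
  ext x'
  simp [hν ∅ .empty]

lemma eq_inclusionInDoubleDual [CompleteSpace X] (hf : Integrable f μ) {A : Set Ω}
    (hA : MeasurableSet A) :
    ν A = NormedSpace.inclusionInDoubleDual ℝ X (∫ ω in A, f ω ∂μ) := by
  ext x'
  rw [hν A hA, NormedSpace.dual_def, x'.integral_comp_comm hf.integrableOn]

lemma enorm_le_setLIntegral [CompleteSpace X] (hf : Integrable f μ) {A : Set Ω}
    (hA : MeasurableSet A) : ‖ν A‖ₑ ≤ ∫⁻ ω in A, ‖f ω‖ₑ ∂μ :=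
  calc ‖ν A‖ₑ ≤ ‖∫ ω in A, f ω ∂μ‖ₑ := by
        rw [hν.eq_inclusionInDoubleDual hf hA, enorm_le_iff_norm_le]
        exact NormedSpace.double_dual_bound ℝ X _
    _ ≤ ∫⁻ ω in A, ‖f ω‖ₑ ∂μ := enorm_integral_le_lintegral_enorm _

lemma ofReal_norm_rpow_le [CompleteSpace X] (hp : 1 ≤ p) (hf : Integrable f μ) {A : Set Ω}
    (hA : MeasurableSet A) :
    ENNReal.ofReal ‖ν A‖ ^ p ≤ (∫⁻ ω in A, ‖f ω‖ₑ ^ p ∂μ) * μ A ^ (p - 1) :=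
  calc ENNReal.ofReal ‖ν A‖ ^ p ≤ (∫⁻ ω in A, ‖f ω‖ₑ ∂μ) ^ p := by
        rw [ofReal_norm (ν A)]
        exact ENNReal.rpow_le_rpow (hν.enorm_le_setLIntegral hf hA) (by linarith)
    _ ≤ (∫⁻ ω in A, ‖f ω‖ₑ ^ p ∂μ) * μ A ^ (p - 1) := by
        simpa using lintegral_enorm_rpow_le_mul_measure_univ hp hf.aestronglyMeasurable.restrict

lemma totalPVariation_le_eLpNorm [CompleteSpace X] (hp : 1 ≤ p) (hf : Integrable f μ) :
    totalPVariation μ p ν ≤ eLpNorm f (ENNReal.ofReal p) μ := by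
  have hp0 : 0 < p := one_pos.trans_le hp
  rw [eLpNorm_ofReal_eq_lintegral_rpow_enorm hp0]
  refine iSup₂_le fun P hP ↦ ENNReal.rpow_le_rpow ?_ (by positivity)
  calc ∑ A ∈ P, ENNReal.ofReal ‖ν A‖ ^ p / μ A ^ (p - 1)
      ≤ ∑ A ∈ P, ∫⁻ ω in A, ‖f ω‖ₑ ^ p ∂μ := Finset.sum_le_sum fun A hA ↦
        ENNReal.div_le_of_le_mul (hν.ofReal_norm_rpow_le hp hf (hP.1 A hA))
    _ = ∫⁻ ω, ‖f ω‖ₑ ^ p ∂μ := hP.sum_setLIntegral _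

lemma ofReal_sub_mul_le_enorm (hf : AEStronglyMeasurable f μ) {A : Set Ω} (hA : MeasurableSet A)
    (hμA : μ A ≠ ∞) {x : X} {ε : ℝ} (hfx : ∀ ω ∈ A, ‖f ω - x‖ ≤ ε) :
    ENNReal.ofReal (‖x‖ - ε) * μ A ≤ ‖ν A‖ₑ := by
  rcases le_or_gt ‖x‖ ε with hxε | hεx
  · simp [ENNReal.ofReal_of_nonpos (sub_nonpos.2 hxε)]
  obtain ⟨x', hx'_norm, hx'x⟩ := exists_dual_vector'' ℝ x
  replace hx'x : x' x = ‖x‖ := hx'x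
  have hx'_le : ∀ y, |x' y| ≤ ‖y‖ := fun y ↦
    (x'.le_opNorm y).trans (mul_le_of_le_one_left (norm_nonneg y) hx'_norm)
  have hlow : ∀ ω ∈ A, ‖x‖ - ε ≤ x' (f ω) := fun ω hω ↦ by
    have := neg_le_of_abs_le (hx'_le (f ω - x))
    rw [map_sub, hx'x] at this
    linarith [hfx ω hω]
  -- `x' ∘ f` is bounded on `A`, so `ν A x'` is a genuine integral there.
  have hint : IntegrableOn (fun ω ↦ x' (f ω)) A μ := by
    refine Measure.integrableOn_of_bounded hμA (x'.continuous.comp_aestronglyMeasurable hf)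
      (M := ‖x‖ + ε) ((ae_restrict_iff' hA).2 (.of_forall fun ω hω ↦ ?_))
    rw [Real.norm_eq_abs]
    linarith [hx'_le (f ω), norm_le_norm_add_norm_sub' (f ω) x, hfx ω hω]
  calc ENNReal.ofReal (‖x‖ - ε) * μ A = ENNReal.ofReal ((‖x‖ - ε) * μ.real A) := by
        rw [ENNReal.ofReal_mul (by linarith), ofReal_measureReal hμA]
    _ ≤ ENNReal.ofReal ‖ν A‖ := by
        refine ENNReal.ofReal_le_ofReal ?_
        calc (‖x‖ - ε) * μ.real A ≤ ν A x' := by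
              rw [hν A hA]
              exact setIntegral_ge_of_const_le_real hA hμA hlow hint
          _ ≤ ‖ν A‖ := (le_abs_self _).trans <| ((ν A).le_opNorm x').trans <|
              mul_le_of_le_one_right (norm_nonneg _) hx'_norm
    _ = ‖ν A‖ₑ := ofReal_norm (ν A)

lemma setLIntegral_ofReal_sub_rpow_le (hp : 0 < p) (hf : AEStronglyMeasurable f μ) {A : Set Ω}
    (hA : MeasurableSet A) (hμA : μ A ≠ ∞) {x : X} {ε : ℝ} (hfx : ∀ ω ∈ A, ‖f ω - x‖ ≤ ε) :
    ∫⁻ ω in A, ENNReal.ofReal (‖f ω‖ - 2 * ε) ^ p ∂μ ≤ ENNReal.ofReal ‖ν A‖ ^ p / μ A ^ (p - 1) :=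
  calc ∫⁻ ω in A, ENNReal.ofReal (‖f ω‖ - 2 * ε) ^ p ∂μ
      ≤ ∫⁻ _ in A, ENNReal.ofReal (‖x‖ - ε) ^ p ∂μ := setLIntegral_mono measurable_const
        fun ω hω ↦ ENNReal.rpow_le_rpow (ENNReal.ofReal_le_ofReal
          (by linarith [norm_le_norm_add_norm_sub' (f ω) x, hfx ω hω])) hp.le
    _ = ENNReal.ofReal (‖x‖ - ε) ^ p * μ A := setLIntegral_const _ _
    _ ≤ ENNReal.ofReal ‖ν A‖ ^ p / μ A ^ (p - 1) := by
        rcases eq_or_ne (μ A) 0 with hμA0 | hμA0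
        · simp [hμA0]
        rw [ENNReal.le_div_iff_mul_le (.inl (by simp [hμA0, hμA]))
          (.inl (ENNReal.rpow_ne_top_of_ne_zero hμA0 hμA)), mul_assoc]
        nth_rw 1 [← ENNReal.rpow_one (μ A)]
        rw [← ENNReal.rpow_add _ _ hμA0 hμA, add_sub_cancel,
          ← ENNReal.mul_rpow_of_nonneg _ _ hp.le, ofReal_norm (ν A)]
        exact ENNReal.rpow_le_rpow (hν.ofReal_sub_mul_le_enorm hf hA hμA hfx) hp.le

lemma lintegral_ofReal_sub_rpow_le_totalPVariation [IsFiniteMeasure μ] (hp : 0 < p)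
    (hf : StronglyMeasurable f) {ε : ℝ} (hε : 0 < ε) :
    ∫⁻ ω, ENNReal.ofReal (‖f ω‖ - 2 * ε) ^ p ∂μ ≤ totalPVariation μ p ν ^ p := by
  borelize X
  obtain ⟨x, hx⟩ := hf.exists_seq_iUnion_preimage_ball hε
  set A := disjointed fun k ↦ f ⁻¹' Metric.ball (x k) ε
  have hA : ∀ k, MeasurableSet (A k) :=
    .disjointed fun k ↦ hf.measurable Metric.isOpen_ball.measurableSet
  have hfx : ∀ k, ∀ ω ∈ A k, ‖f ω - x k‖ ≤ ε := fun k ω hω ↦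
    (mem_ball_iff_norm.1 (disjointed_subset _ k hω)).le
  calc ∫⁻ ω, ENNReal.ofReal (‖f ω‖ - 2 * ε) ^ p ∂μ
      = ∑' k, ∫⁻ ω in A k, ENNReal.ofReal (‖f ω‖ - 2 * ε) ^ p ∂μ := by
        rw [← lintegral_iUnion hA (disjoint_disjointed _), iUnion_disjointed, hx,
          Measure.restrict_univ]
    _ ≤ ∑' k, ENNReal.ofReal ‖ν (A k)‖ ^ p / μ (A k) ^ (p - 1) := ENNReal.tsum_le_tsum fun k ↦
        hν.setLIntegral_ofReal_sub_rpow_le hp hf.aestronglyMeasurable (hA k)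
          (measure_ne_top μ _) (hfx k)
    _ ≤ totalPVariation μ p ν ^ p := tsum_le_totalPVariation_rpow hp hν.empty hA
        (disjoint_disjointed _)

lemma eLpNorm_le_totalPVariation [IsFiniteMeasure μ] (hp : 0 < p) (hf : StronglyMeasurable f) :
    eLpNorm f (ENNReal.ofReal p) μ ≤ totalPVariation μ p ν := by
  rw [eLpNorm_ofReal_eq_lintegral_rpow_enorm hp, one_div, ENNReal.rpow_inv_le_iff hp]
  simp_rw [← ofReal_norm]
  refine lintegral_ofReal_rpow_le_of_forall_sub hf.norm.measurable hp.le fun ε hε ↦ ?_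
  simpa [mul_div_cancel₀] using
    hν.lintegral_ofReal_sub_rpow_le_totalPVariation hp hf (half_pos hε)

end IsDunfordIntegral

end Dunford

theorem stmt12_general {Ω : Type*} [MeasurableSpace Ω] (μ : Measure Ω) [IsProbabilityMeasure μ]
    {X : Type*} [NormedAddCommGroup X] [NormedSpace ℝ X] [CompleteSpace X]
    (p : ℝ) (hp : 1 ≤ p) (f : Ω → X) (hsm : StronglyMeasurable f)
    (ν : Set Ω → StrongDual ℝ (StrongDual ℝ X))
    (hν : ∀ A : Set Ω, MeasurableSet A → ∀ x' : StrongDual ℝ X,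
      ν A x' = ∫ ω in A, x' (f ω) ∂μ)
    (hbv : totalPVariation μ p ν ≠ ⊤) :
    MemLp f (ENNReal.ofReal p) μ ∧
      eLpNorm f (ENNReal.ofReal p) μ = totalPVariation μ p ν := by
  have hν : IsDunfordIntegral μ f ν := hν
  have hle : eLpNorm f (ENNReal.ofReal p) μ ≤ totalPVariation μ p ν :=
    hν.eLpNorm_le_totalPVariation (one_pos.trans_le hp) hsm
  have hmem : MemLp f (ENNReal.ofReal p) μ := ⟨hsm.aestronglyMeasurable, hle.trans_lt hbv.lt_top⟩
  exact ⟨hmem, hle.antisymm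
    (hν.totalPVariation_le_eLpNorm hp (hmem.integrable (ENNReal.one_le_ofReal.2 hp)))⟩

/-- If `f : Ω → X` is strongly measurable, `p`-Dunford integrable, and its Dunford indefinite
integral `ν_f : Σ → X**` has bounded `p`-variation, then `f` is `p`-Bochner integrable with
`‖f‖_{L^p(μ,X)} = |ν_f|_p(Ω)`. -/
theorem stmt12 {Ω : Type*} [MeasurableSpace Ω] (μ : Measure Ω) [IsProbabilityMeasure μ]
    {X : Type*} [NormedAddCommGroup X] [NormedSpace ℝ X] [CompleteSpace X]
    (p : ℝ) (hp : 1 ≤ p) (f : Ω → X) (hsm : StronglyMeasurable f)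
    (hf : ∀ x' : StrongDual ℝ X, MemLp (fun ω => x' (f ω)) (ENNReal.ofReal p) μ)
    (ν : Set Ω → StrongDual ℝ (StrongDual ℝ X))
    (hν : ∀ A : Set Ω, MeasurableSet A → ∀ x' : StrongDual ℝ X,
      ν A x' = ∫ ω in A, x' (f ω) ∂μ)
    (hbv : totalPVariation μ p ν ≠ ⊤) :
    MemLp f (ENNReal.ofReal p) μ ∧
      eLpNorm f (ENNReal.ofReal p) μ = totalPVariation μ p ν :=
  stmt12_general μ p hp f hsm ν hν hbv
end

section
/- Let u : X → Y be a p-summing operator and ν : Σ → X a finitely additive vector measure vanishing on μ-null sets with bounded p-semivariation. Then u ∘ ν has bounded p-variation and |u ∘ ν|_p(Ω) ≤ π_p(u) · ‖ν‖_p(Ω). -/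
open MeasureTheory ENNReal

/-! For a measurable partition `P`, put `x_A = μ(A)^{-(p-1)/p} • ν(A)`.
Then `‖T x_A‖^p = ‖T ν(A)‖^p / μ(A)^{p-1}` for every linear `T`, so for `T = x'` in the
dual ball the weak `p`-sum of the `x_A` is the `p`-variation sum of `x' ∘ ν` over `P`, at
most `‖ν‖_p(Ω)^p`, while for `T = u` the strong `p`-sum is the `p`-variation sum of `u ∘ ν`.
The `p`-summing inequality compares the two. -/

section PSumming

variable {X Y : Type*} [NormedAddCommGroup X] [NormedSpace ℝ X]
  [NormedAddCommGroup Y] [NormedSpace ℝ Y]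

def IsPSumming (p : ℝ) (u : X →L[ℝ] Y) (K : ℝ) : Prop :=
  ∀ (n : ℕ) (x : Fin n → X) (B : ℝ),
    (∀ x' : StrongDual ℝ X, ‖x'‖ ≤ 1 → ∑ i, |x' (x i)| ^ p ≤ B) →
    ∑ i, ‖u (x i)‖ ^ p ≤ K ^ p * B

theorem IsPSumming.sum_le {p K : ℝ} {u : X →L[ℝ] Y} (hu : IsPSumming p u K)
    {ι : Type*} (s : Finset ι) (x : ι → X) (B : ℝ)
    (hB : ∀ x' : StrongDual ℝ X, ‖x'‖ ≤ 1 → ∑ i ∈ s, |x' (x i)| ^ p ≤ B) :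
    ∑ i ∈ s, ‖u (x i)‖ ^ p ≤ K ^ p * B := by
  have reindex : ∀ f : ι → ℝ, ∑ j : Fin s.card, f (s.equivFin.symm j) = ∑ i ∈ s, f i :=
    fun f => (s.equivFin.symm.sum_comp (fun i : s => f i)).trans (s.sum_coe_sort f)
  rw [← reindex]
  exact hu _ _ B fun x' hx' => (reindex _).trans_le (hB x' hx')

end PSumming

section PVariation

variable {Ω : Type*} [MeasurableSpace Ω] {Z : Type*} [NormedAddCommGroup Z]

noncomputable def pVariationSum (μ : Measure Ω) (p : ℝ) (ν : Set Ω → Z)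
    (P : Finset (Set Ω)) : ℝ≥0∞ :=
  ∑ A ∈ P, ENNReal.ofReal ‖ν A‖ ^ p / (μ A) ^ (p - 1)

noncomputable def pSemivariation {X : Type*} [NormedAddCommGroup X] [NormedSpace ℝ X]
    (μ : Measure Ω) (p : ℝ) (ν : Set Ω → X) : ℝ≥0∞ :=
  ⨆ (x' : StrongDual ℝ X) (_ : ‖x'‖ ≤ 1), totalPVariation μ p (fun A => x' (ν A))

variable {μ : Measure Ω} {p : ℝ}

theorem pVariationSum_le_totalPVariation_rpow (hp : 0 < p) (ν : Set Ω → Z)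
    {P : Finset (Set Ω)} (hP : IsMeasPartition P) :
    pVariationSum μ p ν P ≤ totalPVariation μ p ν ^ p := by
  calc pVariationSum μ p ν P = (pVariationSum μ p ν P ^ (1 / p)) ^ p := by
        rw [← ENNReal.rpow_mul, one_div_mul_cancel hp.ne', ENNReal.rpow_one]
    _ ≤ totalPVariation μ p ν ^ p :=
        ENNReal.rpow_le_rpow (le_iSup₂ (f := fun P (_ : IsMeasPartition P) =>
          pVariationSum μ p ν P ^ (1 / p)) P hP) hp.le

theorem totalPVariation_le_of_pVariationSum_le (hp : 0 < p) {ν : Set Ω → Z} {C : ℝ≥0∞}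
    (h : ∀ P, IsMeasPartition P → pVariationSum μ p ν P ≤ C ^ p) :
    totalPVariation μ p ν ≤ C :=
  iSup₂_le fun P hP =>
    calc pVariationSum μ p ν P ^ (1 / p) ≤ (C ^ p) ^ (1 / p) :=
          ENNReal.rpow_le_rpow (h P hP) (one_div_nonneg.2 hp.le)
      _ = C := by rw [← ENNReal.rpow_mul, mul_one_div_cancel hp.ne', ENNReal.rpow_one]

variable [NormedSpace ℝ Z]

/-- At `m = 0` the real factor `0 ^ (-(p - 1) / p)` is junk (it is `1` for `p = 1`);
the hypothesis `hw` makes it irrelevant. -/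
theorem ofReal_norm_rpow_smul_rpow (hp : 0 < p) {m : ℝ≥0∞} (hm : m ≠ ⊤) {w : Z}
    (hw : m = 0 → w = 0) :
    ENNReal.ofReal (‖m.toReal ^ (-(p - 1) / p) • w‖ ^ p) =
      ENNReal.ofReal ‖w‖ ^ p / m ^ (p - 1) := by
  rcases eq_or_ne m 0 with rfl | hm0
  · simp [hw rfl, Real.zero_rpow hp.ne', ENNReal.zero_rpow_of_pos hp]
  have ht : 0 < m.toReal := ENNReal.toReal_pos hm0 hm
  have hscale : (m.toReal ^ (-(p - 1) / p)) ^ p = m.toReal ^ (-(p - 1)) := by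
    rw [← Real.rpow_mul ht.le, div_mul_cancel₀ _ hp.ne']
  rw [norm_smul, Real.norm_of_nonneg (Real.rpow_nonneg ht.le _),
    Real.mul_rpow (Real.rpow_nonneg ht.le _) (norm_nonneg _), hscale, mul_comm,
    ENNReal.ofReal_mul (Real.rpow_nonneg (norm_nonneg _) _),
    ENNReal.ofReal_rpow_of_nonneg (norm_nonneg _) hp.le,
    ← ENNReal.ofReal_rpow_of_pos ht, ENNReal.ofReal_toReal hm, ENNReal.rpow_neg, div_eq_mul_inv]

theorem pVariationSum_eq_ofReal_sum [IsFiniteMeasure μ] (hp : 0 < p) {ν : Set Ω → Z}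
    {P : Finset (Set Ω)} (hν : ∀ A ∈ P, μ A = 0 → ν A = 0) :
    pVariationSum μ p ν P =
      ENNReal.ofReal (∑ A ∈ P, ‖(μ A).toReal ^ (-(p - 1) / p) • ν A‖ ^ p) := by
  rw [ENNReal.ofReal_sum_of_nonneg fun A _ => Real.rpow_nonneg (norm_nonneg _) _]
  exact Finset.sum_congr rfl fun A hA =>
    (ofReal_norm_rpow_smul_rpow hp (measure_ne_top μ A) (hν A hA)).symm

end PVariation

theorem pVariationSum_comp_le {Ω : Type*} [MeasurableSpace Ω] {μ : Measure Ω}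
    [IsFiniteMeasure μ] {X Y : Type*} [NormedAddCommGroup X] [NormedSpace ℝ X]
    [NormedAddCommGroup Y] [NormedSpace ℝ Y] {p K : ℝ} (hp : 0 < p) (hK : 0 ≤ K)
    {u : X →L[ℝ] Y} (hu : IsPSumming p u K) {ν : Set Ω → X}
    (hnull : ∀ A, MeasurableSet A → μ A = 0 → ν A = 0)
    (hsv : pSemivariation μ p ν ≠ ⊤) {P : Finset (Set Ω)} (hP : IsMeasPartition P) :
    pVariationSum μ p (fun A => u (ν A)) P ≤
      (ENNReal.ofReal K * pSemivariation μ p ν) ^ p := by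
  set S := pSemivariation μ p ν
  set x : Set Ω → X := fun A => (μ A).toReal ^ (-(p - 1) / p) • ν A
  have hνP : ∀ A ∈ P, μ A = 0 → ν A = 0 := fun A hA => hnull A (hP.1 A hA)
  have weak_sum_le :
      ∀ x' : StrongDual ℝ X, ‖x'‖ ≤ 1 → ∑ A ∈ P, |x' (x A)| ^ p ≤ S.toReal ^ p := by
    intro x' hx'
    have hle : pVariationSum μ p (fun A => x' (ν A)) P ≤ S ^ p :=
      (pVariationSum_le_totalPVariation_rpow hp _ hP).trans
        (ENNReal.rpow_le_rpow (le_iSup₂ (f := fun (x' : StrongDual ℝ X) (_ : ‖x'‖ ≤ 1) =>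
          totalPVariation μ p (fun A => x' (ν A))) x' hx') hp.le)
    rw [pVariationSum_eq_ofReal_sum hp fun A hA h0 => by simp [hνP A hA h0],
      ENNReal.ofReal_le_iff_le_toReal (ENNReal.rpow_ne_top_of_nonneg hp.le hsv),
      ← ENNReal.toReal_rpow] at hle
    simpa [x, Real.norm_eq_abs] using hle
  have strong_sum_le := hu.sum_le P x _ weak_sum_le
  rw [pVariationSum_eq_ofReal_sum hp fun A hA h0 => by simp [hνP A hA h0]]
  calc ENNReal.ofReal (∑ A ∈ P, ‖(μ A).toReal ^ (-(p - 1) / p) • u (ν A)‖ ^ p)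
      = ENNReal.ofReal (∑ A ∈ P, ‖u (x A)‖ ^ p) := by simp [x]
    _ ≤ ENNReal.ofReal (K ^ p * S.toReal ^ p) := ENNReal.ofReal_le_ofReal strong_sum_le
    _ = (ENNReal.ofReal K * S) ^ p := by
      rw [← Real.mul_rpow hK ENNReal.toReal_nonneg,
        ← ENNReal.ofReal_rpow_of_nonneg (mul_nonneg hK ENNReal.toReal_nonneg) hp.le,
        ENNReal.ofReal_mul hK, ENNReal.ofReal_toReal hsv]

theorem stmt16_general {Ω : Type*} [MeasurableSpace Ω] (μ : Measure Ω) [IsProbabilityMeasure μ]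
    {X Y : Type*} [NormedAddCommGroup X] [NormedSpace ℝ X]
    [NormedAddCommGroup Y] [NormedSpace ℝ Y]
    (p : ℝ) (hp : 1 ≤ p) (u : X →L[ℝ] Y) (K : ℝ) (hK : 0 ≤ K)
    (hsum : ∀ (n : ℕ) (x : Fin n → X) (B : ℝ),
      (∀ x' : StrongDual ℝ X, ‖x'‖ ≤ 1 → ∑ i, |x' (x i)| ^ p ≤ B) →
      ∑ i, ‖u (x i)‖ ^ p ≤ K ^ p * B)
    (ν : Set Ω → X)
    (hnull : ∀ A : Set Ω, MeasurableSet A → μ A = 0 → ν A = 0)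
    (hsv : (⨆ (x' : StrongDual ℝ X) (_ : ‖x'‖ ≤ 1),
      totalPVariation μ p (fun A => x' (ν A))) ≠ ⊤) :
    totalPVariation μ p (fun A => u (ν A)) ≤
      ENNReal.ofReal K * ⨆ (x' : StrongDual ℝ X) (_ : ‖x'‖ ≤ 1),
        totalPVariation μ p (fun A => x' (ν A)) :=
  totalPVariation_le_of_pVariationSum_le (by linarith) fun _ hP =>
    pVariationSum_comp_le (by linarith) hK hsum hnull hsv hP

/-- If `u : X → Y` is `p`-summing with constant `K` and `ν : Σ → X` is a finitely additive
vector measure vanishing on `μ`-null sets with bounded `p`-semivariation, then `u ∘ ν` has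
bounded `p`-variation and `|u ∘ ν|_p(Ω) ≤ π_p(u) ‖ν‖_p(Ω)`. -/
theorem stmt16 {Ω : Type*} [MeasurableSpace Ω] (μ : Measure Ω) [IsProbabilityMeasure μ]
    {X Y : Type*} [NormedAddCommGroup X] [NormedSpace ℝ X] [CompleteSpace X]
    [NormedAddCommGroup Y] [NormedSpace ℝ Y] [CompleteSpace Y]
    (p : ℝ) (hp : 1 ≤ p) (u : X →L[ℝ] Y) (K : ℝ) (hK : 0 ≤ K)
    (hsum : ∀ (n : ℕ) (x : Fin n → X) (B : ℝ),
      (∀ x' : StrongDual ℝ X, ‖x'‖ ≤ 1 → ∑ i, |x' (x i)| ^ p ≤ B) →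
      ∑ i, ‖u (x i)‖ ^ p ≤ K ^ p * B)
    (ν : Set Ω → X)
    (hadd : ∀ A B : Set Ω, MeasurableSet A → MeasurableSet B → Disjoint A B →
      ν (A ∪ B) = ν A + ν B)
    (hnull : ∀ A : Set Ω, MeasurableSet A → μ A = 0 → ν A = 0)
    (hsv : (⨆ (x' : StrongDual ℝ X) (_ : ‖x'‖ ≤ 1),
      totalPVariation μ p (fun A => x' (ν A))) ≠ ⊤) :
    totalPVariation μ p (fun A => u (ν A)) ≤
      ENNReal.ofReal K * ⨆ (x' : StrongDual ℝ X) (_ : ‖x'‖ ≤ 1),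
        totalPVariation μ p (fun A => x' (ν A)) :=
  stmt16_general μ p hp u K hK hsum ν hnull hsv
end
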